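/- Let 0 < δ < 1 and let X(δ) = {x ∈ ℝⁿ : dist(x, X) < δ}. Then for every a, b ∈ E and every x ∈ X(δ): x + b ≠ 0, φ_b(x) + a ≠ 0, and φ_a(φ_b(x)) ∈ X. Consequently, for every finite word w = w₁…w_m of letters in E with m ≥ 2, the composition φ_w = φ_{w₁} ∘ ⋯ ∘ φ_{w_m} maps X(δ) into X(δ). -/

import Mathlib

/-- The alphabet of the `n`-dimensional continued fraction system. -/
def cfAlphabet (n : ℕ) [NeZero n] : Set (EuclideanSpace ℝ (Fin n)) :=
  {e | (∃ k : ℕ, 0 < k ∧ e 0 = k) ∧ ∀ i : Fin n, i ≠ 0 → ∃ m : ℤ, e i = m}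

/-- The center `v_{1/2} = (1/2, 0, …, 0)`. -/
noncomputable def cfCenter (n : ℕ) [NeZero n] : EuclideanSpace ℝ (Fin n) :=
  WithLp.toLp 2 (fun i : Fin n => if i = 0 then (1/2 : ℝ) else 0)

/-- The generator `φ_e(x) = (x + e)/|x + e|²`. -/
noncomputable def cfMap {n : ℕ} (e : EuclideanSpace ℝ (Fin n)) (x : EuclideanSpace ℝ (Fin n)) :
    EuclideanSpace ℝ (Fin n) :=
  (‖x + e‖ ^ 2)⁻¹ • (x + e)

/-- `X(δ) = {x : dist(x, X) < δ}` where `X` is the closed ball of radius `1/2`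
centered at `v_{1/2}`. -/
noncomputable def cfNbhd (n : ℕ) [NeZero n] (δ : ℝ) : Set (EuclideanSpace ℝ (Fin n)) :=
  {x | Metric.infDist x (Metric.closedBall (cfCenter n) (1/2)) < δ}

/-- The composition `φ_w = φ_{w₁} ∘ ⋯ ∘ φ_{w_m}` coded by a finite word
`w = w₁…w_m` of letters. -/
noncomputable def cfWordMap {n : ℕ} (w : List (EuclideanSpace ℝ (Fin n))) :
    EuclideanSpace ℝ (Fin n) → EuclideanSpace ℝ (Fin n) :=
  w.foldr (fun e f => cfMap e ∘ f) id

/-!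
Since `X` is the ball through `0` with center `c = v_{1/2}`, it is `{x | ‖x‖² ≤ 2⟪x, c⟫} = {x | ‖x‖² ≤ x₀}`,
so the inversion `y ↦ y / ‖y‖²` maps the half-space `{y | 1 ≤ y₀}` into `X`. Every `x ∈ X(δ)` lies in
`H = {x | -1 < x₀}`, which each `φ_e` maps into itself. For `x ∈ H` we get `(x + b)₀ > 0`, hence
`φ_b(x)₀ > 0`, `(φ_b(x) + a)₀ ≥ 1` and `φ_a(φ_b(x)) ∈ X ⊆ X(δ)`.
-/

open Metric
open scoped RealInnerProductSpace

section InnerProductSpace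

variable {E : Type*} [NormedAddCommGroup E] [InnerProductSpace ℝ E] {c x y : E}

theorem mem_closedBall_norm_iff : x ∈ closedBall c ‖c‖ ↔ ‖x‖ ^ 2 ≤ 2 * ⟪x, c⟫ := by
  rw [mem_closedBall, dist_eq_norm, ← sq_le_sq₀ (norm_nonneg _) (norm_nonneg _),
    norm_sub_sq_real]
  constructor <;> intro h <;> linarith

theorem inv_norm_sq_smul_mem_closedBall_norm (h : 1 ≤ 2 * ⟪y, c⟫) :
    (‖y‖ ^ 2)⁻¹ • y ∈ closedBall c ‖c‖ := by
  have hy : y ≠ 0 := by rintro rfl; simp at h; linarith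
  have hpos : 0 < ‖y‖ ^ 2 := by positivity
  rw [mem_closedBall_norm_iff, norm_smul, real_inner_smul_left, norm_inv, norm_pow, norm_norm,
    mul_pow, inv_pow, sq (‖y‖ ^ 2), mul_inv, mul_assoc, inv_mul_cancel₀ hpos.ne']
  linarith [mul_le_mul_of_nonneg_left h (inv_nonneg.2 hpos.le)]

theorem neg_mul_norm_lt_inner_of_infDist_closedBall_lt {δ : ℝ} (hc : c ≠ 0)
    (hx : infDist x (closedBall c ‖c‖) < δ) : -(δ * ‖c‖) < ⟪x, c⟫ := by
  obtain ⟨y, hy, hxy⟩ := (infDist_lt_iff ⟨c, mem_closedBall_self (norm_nonneg c)⟩).1 hx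
  have hyc : 0 ≤ ⟪y, c⟫ := by linarith [sq_nonneg ‖y‖, mem_closedBall_norm_iff.1 hy]
  have hxyc := (abs_le.1 (abs_real_inner_le_norm (x - y) c)).1
  have := mul_lt_mul_of_pos_right (dist_eq_norm x y ▸ hxy) (norm_pos_iff.2 hc)
  rw [inner_sub_left] at hxyc
  linarith

end InnerProductSpace

section ContinuedFraction

variable {n : ℕ} [NeZero n] {δ : ℝ} {a b e x : EuclideanSpace ℝ (Fin n)}

theorem two_mul_inner_cfCenter (x : EuclideanSpace ℝ (Fin n)) : 2 * ⟪x, cfCenter n⟫ = x 0 := by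
  simp [PiLp.inner_apply, cfCenter]

theorem norm_cfCenter : ‖cfCenter n‖ = 1 / 2 := by
  have h := two_mul_inner_cfCenter (cfCenter n)
  rw [real_inner_self_eq_norm_sq] at h
  have h0 : cfCenter n 0 = 1 / 2 := by simp [cfCenter]
  nlinarith [norm_nonneg (cfCenter n)]

theorem one_le_apply_zero_of_mem_cfAlphabet (he : e ∈ cfAlphabet n) : 1 ≤ e 0 := by
  obtain ⟨⟨k, hk, hke⟩, -⟩ := he
  exact hke ▸ Nat.one_le_cast.2 hk

theorem neg_lt_apply_zero_of_mem_cfNbhd (hx : x ∈ cfNbhd n δ) : -δ < x 0 := by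
  have hc : cfCenter n ≠ 0 := norm_ne_zero_iff.1 (by norm_num [norm_cfCenter])
  have hx' : infDist x (closedBall (cfCenter n) ‖cfCenter n‖) < δ := by
    rw [norm_cfCenter]; exact hx
  have := neg_mul_norm_lt_inner_of_infDist_closedBall_lt hc hx'
  rw [norm_cfCenter] at this
  linarith [two_mul_inner_cfCenter x]

theorem closedBall_subset_cfNbhd (hδ : 0 < δ) : closedBall (cfCenter n) (1 / 2) ⊆ cfNbhd n δ :=
  fun _ hx => (infDist_zero_of_mem hx).trans_lt hδ

theorem cfMap_mem_closedBall (h : 1 ≤ (x + e) 0) : cfMap e x ∈ closedBall (cfCenter n) (1 / 2) :=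
  norm_cfCenter (n := n) ▸
    inv_norm_sq_smul_mem_closedBall_norm ((two_mul_inner_cfCenter (x + e)).symm ▸ h)

theorem ne_zero_of_apply_zero_pos (h : 0 < x 0) : x ≠ 0 := by
  rintro rfl
  simp at h

theorem cfMap_apply_zero_pos (h : 0 < (x + e) 0) : 0 < cfMap e x 0 := by
  have : 0 < ‖x + e‖ := norm_pos_iff.2 (ne_zero_of_apply_zero_pos h)
  simp only [cfMap, PiLp.smul_apply, smul_eq_mul]
  positivity

theorem cfMap_cfMap_mem_closedBall (ha : a ∈ cfAlphabet n) (hb : b ∈ cfAlphabet n)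
    (hx : -1 < x 0) :
    x + b ≠ 0 ∧ cfMap b x + a ≠ 0 ∧ cfMap a (cfMap b x) ∈ closedBall (cfCenter n) (1 / 2) := by
  have hxb : 0 < (x + b) 0 := by
    rw [PiLp.add_apply]; linarith [one_le_apply_zero_of_mem_cfAlphabet hb]
  have hxba : 1 ≤ (cfMap b x + a) 0 := by
    rw [PiLp.add_apply]
    linarith [one_le_apply_zero_of_mem_cfAlphabet ha, cfMap_apply_zero_pos hxb]
  exact ⟨ne_zero_of_apply_zero_pos hxb, ne_zero_of_apply_zero_pos (by linarith),
    cfMap_mem_closedBall hxba⟩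

theorem neg_one_lt_cfWordMap_apply_zero {w : List (EuclideanSpace ℝ (Fin n))}
    (hw : ∀ e ∈ w, e ∈ cfAlphabet n) (hx : -1 < x 0) : -1 < cfWordMap w x 0 := by
  induction w with
  | nil => exact hx
  | cons e w ih =>
    have hpos : 0 < (cfWordMap w x + e) 0 := by
      rw [PiLp.add_apply]
      linarith [ih fun e' he' => hw e' (List.mem_cons_of_mem e he'),
        one_le_apply_zero_of_mem_cfAlphabet (hw e List.mem_cons_self)]
    exact (neg_one_lt_zero).trans (cfMap_apply_zero_pos hpos)

theorem cfWordMap_mem_closedBall {w : List (EuclideanSpace ℝ (Fin n))}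
    (hw : ∀ e ∈ w, e ∈ cfAlphabet n) (hlen : 2 ≤ w.length) (hx : -1 < x 0) :
    cfWordMap w x ∈ closedBall (cfCenter n) (1 / 2) := by
  obtain _ | ⟨a, _ | ⟨b, w⟩⟩ := w
  · simp at hlen
  · simp at hlen
  · simp only [List.mem_cons, forall_eq_or_imp] at hw
    exact (cfMap_cfMap_mem_closedBall hw.1 hw.2.1
      (neg_one_lt_cfWordMap_apply_zero hw.2.2 hx)).2.2

end ContinuedFraction

theorem cfWordMap_mapsTo_nbhd_general {n : ℕ} [NeZero n] (δ : ℝ) (hδ0 : 0 < δ)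
    (hδ1 : δ < 1) :
    (∀ a ∈ cfAlphabet n, ∀ b ∈ cfAlphabet n, ∀ x ∈ cfNbhd n δ,
      x + b ≠ 0 ∧ cfMap b x + a ≠ 0 ∧
        cfMap a (cfMap b x) ∈ Metric.closedBall (cfCenter n) (1/2)) ∧
    (∀ w : List (EuclideanSpace ℝ (Fin n)), (∀ e ∈ w, e ∈ cfAlphabet n) → 2 ≤ w.length →
      ∀ x ∈ cfNbhd n δ, cfWordMap w x ∈ cfNbhd n δ) := by
  have hX : ∀ x ∈ cfNbhd n δ, -1 < x 0 := fun x hx => by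
    linarith [neg_lt_apply_zero_of_mem_cfNbhd hx]
  exact ⟨fun a ha b hb x hx => cfMap_cfMap_mem_closedBall ha hb (hX x hx),
    fun w hw hlen x hx => closedBall_subset_cfNbhd hδ0 (cfWordMap_mem_closedBall hw hlen (hX x hx))⟩

/-- For `0 < δ < 1`: for all `a, b ∈ E` and `x ∈ X(δ)` one has `x + b ≠ 0`,
`φ_b(x) + a ≠ 0` and `φ_a(φ_b(x)) ∈ X`; consequently every composition `φ_w` coded by a
word `w` of length `≥ 2` of letters from `E` maps `X(δ)` into `X(δ)`. -/
theorem cfWordMap_mapsTo_nbhd {n : ℕ} [NeZero n] (hn : 2 ≤ n) (δ : ℝ) (hδ0 : 0 < δ)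
    (hδ1 : δ < 1) :
    (∀ a ∈ cfAlphabet n, ∀ b ∈ cfAlphabet n, ∀ x ∈ cfNbhd n δ,
      x + b ≠ 0 ∧ cfMap b x + a ≠ 0 ∧
        cfMap a (cfMap b x) ∈ Metric.closedBall (cfCenter n) (1/2)) ∧
    (∀ w : List (EuclideanSpace ℝ (Fin n)), (∀ e ∈ w, e ∈ cfAlphabet n) → 2 ≤ w.length →
      ∀ x ∈ cfNbhd n δ, cfWordMap w x ∈ cfNbhd n δ) :=
  cfWordMap_mapsTo_nbhd_general δ hδ0 hδ1
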